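/- arXiv:1806.04742 — 4 statements merged into one kernel-verified Lean document; each statement's English description precedes it below -/
import Mathlib

section
/- Let K* be a minimum s-t vertex cut of G′ with the prefix property, let k_v be the number of copies of v in K*, and set p_v = k_v · α. Then the power assignment (p_v) is feasible for MSPEC on G: removing all edges (u,v) with p_u + p_v ≥ w(u,v) (with p_s = p_t = 0) disconnects s from t, and the total assigned power equals α·|K*|. -/
open Finset

variable {α : Type*}

/-- The graph of surviving edges: an edge of `G` survives the power assignment `p`
iff `p u + p v < w (u,v)`; edges with `p u + p v ≥ w` are removed. -/
def cutGraph (G : SimpleGraph α) (w : Sym2 α → ℝ) (p : α → ℝ) : SimpleGraph α where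
  Adj u v := G.Adj u v ∧ p u + p v < w s(u, v)
  symm := by
    constructor
    intro u v h
    refine ⟨h.1.symm, ?_⟩
    rw [Sym2.eq_swap]
    linarith [h.2]
  loopless := ⟨fun u h => G.loopless.irrefl u h.1⟩

/-- MSPEC feasibility: `p s = p t = 0`, powers nonnegative, and removing the
edges `(u,v)` with `p u + p v ≥ w (u,v)` disconnects `s` from `t`. -/
def Feasible (G : SimpleGraph α) (w : Sym2 α → ℝ) (s t : α) (p : α → ℝ) : Prop :=
  p s = 0 ∧ p t = 0 ∧ (∀ v, 0 ≤ p v) ∧ ¬ (cutGraph G w p).Reachable s t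

/-- The uniform (bottleneck) power assignment: power `q` on every vertex of `V`,
and `0` on `s` and `t`. -/
def uniformP [DecidableEq α] (s t : α) (q : ℝ) : α → ℝ :=
  fun v => if v = s ∨ v = t then 0 else q

/-- Deleting a vertex set `K` from a graph (all edges incident to `K` disappear). -/
def delV (H : SimpleGraph α) (K : Set α) : SimpleGraph α where
  Adj u v := H.Adj u v ∧ u ∉ K ∧ v ∉ K
  symm := ⟨fun u v h => ⟨h.1.symm, h.2.2, h.2.1⟩⟩
  loopless := ⟨fun u h => H.loopless.irrefl u h.1⟩

/-- `K` is an `s`-`t` vertex cut of `H`. -/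
def IsCut (H : SimpleGraph α) (s t : α) (K : Set α) : Prop :=
  s ∉ K ∧ t ∉ K ∧ ¬ (delV H K).Reachable s t

/-- The power represented by a copy-vertex of the discretized graph:
copy `(v, i)` represents power `i * al` (and copies of `s`, `t` have power `0`). -/
def copyPow [DecidableEq α] (s t : α) (al : ℝ) (a : α × ℕ) : ℝ :=
  if a.1 = s ∨ a.1 = t then 0 else a.2 * al

/-- Validity of a copy-vertex: each `v ∈ V` has copies `v(0), …, v(c-1)`,
while `s` and `t` are represented by their `0`-th copy only. -/
def copyValid [DecidableEq α] (s t : α) (c : ℕ) (a : α × ℕ) : Prop :=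
  if a.1 = s ∨ a.1 = t then a.2 = 0 else a.2 < c

/-- The discretized graph `G'`: vertices are copies `v(i)`; there is an edge
`(u(i), v(j))` iff `(u,v)` is an edge of `G` and `iα + jα < w (u,v)`
(copies of `s`, `t` count with power `0`). -/
def discGraph [DecidableEq α] (G : SimpleGraph α) (w : Sym2 α → ℝ) (s t : α) (al : ℝ)
    (c : ℕ) : SimpleGraph (α × ℕ) where
  Adj a b := copyValid s t c a ∧ copyValid s t c b ∧ G.Adj a.1 b.1 ∧
      copyPow s t al a + copyPow s t al b < w s(a.1, b.1)
  symm := by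
    constructor
    intro a b h
    refine ⟨h.2.1, h.1, h.2.2.1.symm, ?_⟩
    rw [Sym2.eq_swap]
    linarith [h.2.2.2]
  loopless := ⟨fun a h => G.loopless.irrefl a.1 h.2.2.1⟩

/-- A set of vertices of the discretized graph consisting only of valid copies of
vertices of `V` (i.e. copy-vertices, excluding `s` and `t`). -/
def AllowedCut (s t : α) (c : ℕ) (K : Set (α × ℕ)) : Prop :=
  ∀ a ∈ K, a.1 ≠ s ∧ a.1 ≠ t ∧ a.2 < c

/-! The copy `(v, k v)` just above the prefix of `v` in `K*` is never cut, and it carries power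
exactly `p v = k v · α`. Hence every edge surviving `p` lifts to an edge of `G′` between such
copies outside `K*` (validity `k v < c` holds because `p v < w ≤ cα`), so an `s`-`t` path surviving
`p` would lift to an `s`-`t` path of `G′ - K*`. The power count holds because `K*` consists of
`k v` copies of each `v ∈ V`. -/

section Counting

variable [Fintype α]

theorem ncard_prefixCopies (P : α → Prop) [DecidablePred P] (k : α → ℕ) :
    {a : α × ℕ | P a.1 ∧ a.2 < k a.1}.ncard = ∑ v with P v, k v := by
  have hset : {a : α × ℕ | P a.1 ∧ a.2 < k a.1} =
      ↑(((univ.filter P).sigma fun v => range (k v)).map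
        (Equiv.sigmaEquivProd α ℕ).toEmbedding) := by
    ext ⟨v, i⟩
    simp
  simp only [hset, Set.ncard_coe_finset, card_map, card_sigma, card_range]

end Counting

section Lifting

variable [DecidableEq α] {s t : α} {al : ℝ} {c : ℕ} {k : α → ℕ}

def lowestUncutCopy (s t : α) (k : α → ℕ) (v : α) : α × ℕ :=
  (v, if v = s ∨ v = t then 0 else k v)

theorem lowestUncutCopy_of_terminal {v : α} (hv : v = s ∨ v = t) :
    lowestUncutCopy s t k v = (v, 0) := by
  simp [lowestUncutCopy, hv]

theorem copyPow_lowestUncutCopy (v : α) :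
    copyPow s t al (lowestUncutCopy s t k v) = copyPow s t al (v, k v) := by
  by_cases hv : v = s ∨ v = t <;> simp [lowestUncutCopy, copyPow, hv]

theorem copyPow_nonneg (hal : 0 ≤ al) (a : α × ℕ) : 0 ≤ copyPow s t al a := by
  unfold copyPow
  split_ifs <;> positivity

theorem copyValid_lowestUncutCopy (hal : 0 ≤ al) {v : α}
    (hv : copyPow s t al (v, k v) < c * al) :
    copyValid s t c (lowestUncutCopy s t k v) := by
  by_cases hst : v = s ∨ v = t
  · simp [lowestUncutCopy, copyValid, hst]
  · simp only [copyPow, hst, if_false] at hv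
    simpa [lowestUncutCopy, copyValid, hst] using lt_of_mul_lt_mul_right hv hal

theorem lowestUncutCopy_notMem (v : α) :
    lowestUncutCopy s t k v ∉ {a : α × ℕ | a.1 ≠ s ∧ a.1 ≠ t ∧ a.2 < k a.1} := by
  by_cases hv : v = s ∨ v = t
  · rcases hv with rfl | rfl <;> simp [lowestUncutCopy]
  · simp [lowestUncutCopy, hv]

def cutGraphHom (G : SimpleGraph α) (w : Sym2 α → ℝ) (hal : 0 ≤ al)
    (hw : ∀ u v, G.Adj u v → w s(u, v) ≤ c * al) :
    cutGraph G w (fun v => copyPow s t al (v, k v)) →g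
      delV (discGraph G w s t al c) {a : α × ℕ | a.1 ≠ s ∧ a.1 ≠ t ∧ a.2 < k a.1} where
  toFun := lowestUncutCopy s t k
  map_rel' := by
    rintro u v ⟨hadj, hlt⟩
    have hwc := hw u v hadj
    have hu := copyPow_nonneg hal (s := s) (t := t) (u, k u)
    have hv := copyPow_nonneg hal (s := s) (t := t) (v, k v)
    refine ⟨⟨copyValid_lowestUncutCopy hal (by linarith),
      copyValid_lowestUncutCopy hal (by linarith), hadj, ?_⟩,
      lowestUncutCopy_notMem u, lowestUncutCopy_notMem v⟩
    rw [copyPow_lowestUncutCopy, copyPow_lowestUncutCopy]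
    exact hlt

end Lifting

theorem discretized_solution_feasible_general [Fintype α] [DecidableEq α]
    (G : SimpleGraph α) (w : Sym2 α → ℝ) (s t : α)
    (al : ℝ) (hal : 0 < al) (c : ℕ)
    (hw : ∀ u v, G.Adj u v → w s(u, v) ≤ c * al)
    (k : α → ℕ)
    (hcut : IsCut (discGraph G w s t al c) (s, 0) (t, 0)
      {a : α × ℕ | a.1 ≠ s ∧ a.1 ≠ t ∧ a.2 < k a.1}) :
    Feasible G w s t (fun v => if v = s ∨ v = t then 0 else (k v : ℝ) * al) ∧
      (∑ v, (if v = s ∨ v = t then (0 : ℝ) else (k v : ℝ) * al)) =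
        al * ({a : α × ℕ | a.1 ≠ s ∧ a.1 ≠ t ∧ a.2 < k a.1}.ncard : ℝ) := by
  refine ⟨⟨by simp, by simp, fun v => copyPow_nonneg hal.le (v, k v), fun hreach => ?_⟩, ?_⟩
  · have hlift := hreach.map (cutGraphHom (k := k) G w hal.le hw)
    simp only [cutGraphHom, RelHom.coeFn_mk, lowestUncutCopy_of_terminal (Or.inl rfl),
      lowestUncutCopy_of_terminal (Or.inr rfl)] at hlift
    exact hcut.2.2 hlift
  · have hK : {a : α × ℕ | a.1 ≠ s ∧ a.1 ≠ t ∧ a.2 < k a.1} =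
        {a : α × ℕ | (a.1 ≠ s ∧ a.1 ≠ t) ∧ a.2 < k a.1} := by
      simp only [and_assoc]
    rw [hK, ncard_prefixCopies (fun v => v ≠ s ∧ v ≠ t), Nat.cast_sum, mul_sum, sum_filter]
    refine sum_congr rfl fun v _ => ?_
    by_cases hv : v = s ∨ v = t
    · rcases hv with rfl | rfl <;> simp
    · simp [not_or.mp hv, mul_comm]

/-- given a prefix-structured `s`-`t` vertex cut `K*` of `G'` taking the
first `k v` copies of each `v ∈ V`, the powers `p v = k v · α` are feasible for MSPEC
on `G`, and the total assigned power is `α · |K*|`. -/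
theorem discretized_solution_feasible [Fintype α] [DecidableEq α]
    (G : SimpleGraph α) (w : Sym2 α → ℝ) (s t : α) (hst : s ≠ t)
    (al : ℝ) (hal : 0 < al) (c : ℕ)
    (hw : ∀ u v, G.Adj u v → w s(u, v) ≤ c * al)
    (k : α → ℕ) (hk : ∀ v, k v ≤ c)
    (hcut : IsCut (discGraph G w s t al c) (s, 0) (t, 0)
      {a : α × ℕ | a.1 ≠ s ∧ a.1 ≠ t ∧ a.2 < k a.1}) :
    Feasible G w s t (fun v => if v = s ∨ v = t then 0 else (k v : ℝ) * al) ∧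
      (∑ v, (if v = s ∨ v = t then (0 : ℝ) else (k v : ℝ) * al)) =
        al * ({a : α × ℕ | a.1 ≠ s ∧ a.1 ≠ t ∧ a.2 < k a.1}.ncard : ℝ) :=
  discretized_solution_feasible_general G w s t al hal c hw k hcut
end

section
/- If all edge weights of G equal 1, then MSPEC has an optimal solution in which every power value is 0 or 1, and the optimal value equals the size of a minimum s-t vertex cut in G (restricted to V). -/
open Finset

variable {α : Type*}

/-! The indicator of an `s`-`t` vertex cut is feasible, so the optimum is at most the minimum
cut size. Conversely, a feasible `p` rounds to a cut: with `d v` the least vertex weight of a walk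
from `s` to `v`, feasibility forces `d t ≥ 1`, so for every `θ ∈ [0, 1)` the layer
`{v | d v - p v ≤ θ < d v}` separates `s` from `t`, and averaging over `θ` gives a layer with at
most `∑ v, p v` vertices. -/

open MeasureTheory
open scoped ENNReal

theorem exists_mem_Ico_card_le_sum {ι : Type*} [Fintype ι] (a b : ι → ℝ)
    (hab : ∀ i, a i ≤ b i) :
    ∃ θ ∈ Set.Ico (0 : ℝ) 1,
      (#{i | θ ∈ Set.Ico (a i) (b i)} : ℝ) ≤ ∑ i, (b i - a i) := by
  classical
  set μ := volume.restrict (Set.Ico (0 : ℝ) 1)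
  set f : ℝ → ℝ≥0∞ := fun θ => ∑ i, (Set.Ico (a i) (b i)).indicator 1 θ
  have hμ : μ Set.univ = 1 := by simp [μ]
  have hf : Measurable f :=
    Finset.measurable_sum _ fun i _ => measurable_one.indicator measurableSet_Ico
  have hint : ∫⁻ θ, f θ ∂μ ≤ ENNReal.ofReal (∑ i, (b i - a i)) := by
    rw [lintegral_finsetSum _ fun i _ => measurable_one.indicator measurableSet_Ico,
      ENNReal.ofReal_sum_of_nonneg fun i _ => sub_nonneg.2 (hab i)]
    gcongr with i
    calc ∫⁻ θ, (Set.Ico (a i) (b i)).indicator 1 θ ∂μ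
        = μ (Set.Ico (a i) (b i)) := lintegral_indicator_one measurableSet_Ico
      _ ≤ volume (Set.Ico (a i) (b i)) := Measure.restrict_apply_le _ _
      _ = ENNReal.ofReal (b i - a i) := Real.volume_Ico
  obtain ⟨θ, hθ, hfθ⟩ :=
    exists_notMem_null_le_laverage (μ := μ) (N := (Set.Ico (0 : ℝ) 1)ᶜ)
    (fun h => by rw [h] at hμ; simp at hμ) hf.aemeasurable
    ((Measure.restrict_apply measurableSet_Ico.compl).trans (by rw [Set.compl_inter_self]; simp))
  refine ⟨θ, not_not.1 hθ, ?_⟩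
  have hcount : f θ = #{i | θ ∈ Set.Ico (a i) (b i)} := by
    simp [f, Set.indicator_apply, Finset.sum_boole]
  rw [laverage_eq, hμ, div_one, hcount] at hfθ
  exact (ENNReal.ofReal_le_ofReal_iff (Finset.sum_nonneg fun i _ => sub_nonneg.2 (hab i))).1
    (by simpa using hfθ.trans hint)

namespace SimpleGraph

variable [DecidableEq α] {G : SimpleGraph α} {p : α → ℝ} {s u v : α}

def Walk.vertexWeight (p : α → ℝ) (W : G.Walk u v) : ℝ :=
  ∑ y ∈ W.support.toFinset, p y

/-- This is `sInf ∅ = 0` when `v` is unreachable from `s`. -/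
noncomputable def vertexWeightDist (G : SimpleGraph α) (p : α → ℝ) (s v : α) : ℝ :=
  sInf (Set.range fun W : G.Walk s v => W.vertexWeight p)

theorem finite_range_vertexWeight [Finite α] (G : SimpleGraph α) (p : α → ℝ) (s v : α) :
    (Set.range fun W : G.Walk s v => W.vertexWeight p).Finite :=
  (Set.finite_range fun F : Finset α => ∑ y ∈ F, p y).subset fun _ ⟨_, hW⟩ => ⟨_, hW⟩

theorem vertexWeightDist_le [Finite α] (W : G.Walk s v) :
    G.vertexWeightDist p s v ≤ W.vertexWeight p :=
  csInf_le (finite_range_vertexWeight G p s v).bddBelow (Set.mem_range_self W)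

theorem Reachable.exists_vertexWeight_eq_vertexWeightDist [Finite α] (h : G.Reachable s v) :
    ∃ W : G.Walk s v, W.vertexWeight p = G.vertexWeightDist p s v :=
  (Set.range_nonempty_iff_nonempty.2 h).csInf_mem (finite_range_vertexWeight G p s v)

theorem Reachable.le_vertexWeightDist {x : ℝ} (h : G.Reachable s v)
    (hW : ∀ W : G.Walk s v, x ≤ W.vertexWeight p) : x ≤ G.vertexWeightDist p s v :=
  le_csInf (Set.range_nonempty_iff_nonempty.2 h) (Set.forall_mem_range.2 hW)

theorem vertexWeightDist_self [Finite α] (hp : ∀ v, 0 ≤ p v) (hs : p s = 0) :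
    G.vertexWeightDist p s s = 0 :=
  le_antisymm
    (by simpa [Walk.vertexWeight, hs] using vertexWeightDist_le (p := p) (.nil : G.Walk s s))
    ((Reachable.refl s).le_vertexWeightDist fun _ => Finset.sum_nonneg fun y _ => hp y)

theorem Reachable.vertexWeightDist_le_add [Finite α] (hp : ∀ v, 0 ≤ p v) (h : G.Reachable s u)
    (huv : G.Adj u v) : G.vertexWeightDist p s v ≤ G.vertexWeightDist p s u + p v := by
  obtain ⟨W, hW⟩ := h.exists_vertexWeight_eq_vertexWeightDist (p := p)
  calc G.vertexWeightDist p s v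
      ≤ (W.concat huv).vertexWeight p := vertexWeightDist_le _
    _ = ∑ y ∈ insert v W.support.toFinset, p y := by
      simp [Walk.vertexWeight, Walk.support_concat, List.toFinset_append]
    _ ≤ W.vertexWeight p + p v := ?_
    _ = G.vertexWeightDist p s u + p v := by rw [hW]
  by_cases hv : v ∈ W.support.toFinset
  · rw [Finset.insert_eq_of_mem hv, Walk.vertexWeight]
    linarith [hp v]
  · rw [Finset.sum_insert hv, add_comm, Walk.vertexWeight]

theorem Walk.add_le_vertexWeight_of_mem_darts (hp : ∀ v, 0 ≤ p v) {W : G.Walk u v} {d : G.Dart}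
    (hd : d ∈ W.darts) : p d.fst + p d.snd ≤ W.vertexWeight p := by
  rw [← Finset.sum_pair d.adj.ne]
  refine Finset.sum_le_sum_of_subset_of_nonneg (fun y hy => ?_) fun y _ _ => hp y
  rcases Finset.mem_insert.1 hy with rfl | hy
  · exact List.mem_toFinset.2 (W.dart_fst_mem_support_of_mem_darts hd)
  · rw [Finset.mem_singleton.1 hy]
    exact List.mem_toFinset.2 (W.dart_snd_mem_support_of_mem_darts hd)

end SimpleGraph

open SimpleGraph

section ThresholdCut

variable [DecidableEq α] {G : SimpleGraph α} {p : α → ℝ} {s t : α}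

/-- A walk of vertex weight `< 1` keeps all its edges in `cutGraph`. -/
theorem Feasible.one_le_vertexWeightDist (hf : Feasible G (fun _ => 1) s t p)
    (h : G.Reachable s t) : 1 ≤ G.vertexWeightDist p s t := by
  refine h.le_vertexWeightDist fun W => not_lt.1 fun hW => ?_
  obtain ⟨d, hd, hfst, hsnd⟩ :=
    W.exists_boundary_dart {v | (cutGraph G (fun _ => 1) p).Reachable s v} .rfl hf.2.2.2
  exact hsnd (hfst.trans (Adj.reachable
    ⟨d.adj, (W.add_le_vertexWeight_of_mem_darts hf.2.2.1 hd).trans_lt hW⟩))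

noncomputable def thresholdLayer (G : SimpleGraph α) (p : α → ℝ) (s : α) (θ : ℝ) :
    Set α :=
  {v | θ ∈ Set.Ico (G.vertexWeightDist p s v - p v) (G.vertexWeightDist p s v)}

/-- A walk avoiding the layer would have to cross from distance `≤ θ` to distance `> θ`
along an edge `u v`, but then `d v - p v ≤ d u ≤ θ` puts `v` in the layer. -/
theorem Feasible.isCut_thresholdLayer [Finite α] (hf : Feasible G (fun _ => 1) s t p) {θ : ℝ}
    (hθ : θ ∈ Set.Ico (0 : ℝ) 1) : IsCut G s t (thresholdLayer G p s θ) := by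
  obtain ⟨hs, ht, hp, -⟩ := id hf
  have hds : G.vertexWeightDist p s s = 0 := vertexWeightDist_self hp hs
  refine ⟨fun h => by linarith [h.2, hθ.1], fun h => by linarith [h.1, h.2], fun ⟨W⟩ => ?_⟩
  obtain ⟨d, -, ⟨hreach, hle⟩, hsnd⟩ :=
    W.exists_boundary_dart {v | G.Reachable s v ∧ G.vertexWeightDist p s v ≤ θ}
      ⟨.rfl, hds.le.trans hθ.1⟩
      fun ⟨hr, hle⟩ => by linarith [hf.one_le_vertexWeightDist hr, hθ.2]
  obtain ⟨hadj, -, hnot⟩ := d.adj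
  have hlt : θ < G.vertexWeightDist p s d.snd :=
    not_le.1 fun h => hsnd ⟨hreach.trans hadj.reachable, h⟩
  exact hnot ⟨by linarith [hreach.vertexWeightDist_le_add hp hadj], hlt⟩

end ThresholdCut

theorem Feasible.exists_isCut_ncard_le [Fintype α] {G : SimpleGraph α} {p : α → ℝ} {s t : α}
    (hf : Feasible G (fun _ => 1) s t p) :
    ∃ K, IsCut G s t K ∧ (K.ncard : ℝ) ≤ ∑ v, p v := by
  classical
  obtain ⟨θ, hθ, hcard⟩ := exists_mem_Ico_card_le_sum
    (fun v => G.vertexWeightDist p s v - p v) (G.vertexWeightDist p s) fun v => by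
      linarith [hf.2.2.1 v]
  refine ⟨thresholdLayer G p s θ, hf.isCut_thresholdLayer hθ, ?_⟩
  simpa [thresholdLayer, Set.ncard_eq_toFinset_card'] using hcard

theorem IsCut.feasible_indicator {G : SimpleGraph α} {s t : α} {K : Set α} (hK : IsCut G s t K) :
    Feasible G (fun _ => 1) s t (K.indicator 1) := by
  obtain ⟨hs, ht, hdisc⟩ := hK
  have hcut : cutGraph G (fun _ => 1) (K.indicator 1) = delV G K := by
    ext u v
    by_cases hu : u ∈ K <;> by_cases hv : v ∈ K <;>
      simp [cutGraph, delV, hu, hv]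
  exact ⟨by simp [hs], by simp [ht], Set.indicator_nonneg fun _ _ => zero_le_one,
    hcut ▸ hdisc⟩

theorem Set.sum_indicator_one_eq_ncard {R : Type*} [AddCommMonoidWithOne R] [Fintype α]
    (K : Set α) : ∑ v, K.indicator (1 : α → R) v = K.ncard := by
  classical
  simp [Set.indicator_apply, Finset.sum_boole, Set.ncard_eq_toFinset_card']

theorem uniform_weights_vertex_cut_general [Fintype α]
    (G : SimpleGraph α) (s t : α)
    (OPT : ℝ)
    (hOPT : IsLeast {c : ℝ | ∃ p, Feasible G (fun _ => 1) s t p ∧ ∑ v, p v = c} OPT) :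
    (∃ p, Feasible G (fun _ => 1) s t p ∧ ∑ v, p v = OPT ∧
      ∀ v, p v = 0 ∨ p v = 1) ∧
    ∃ K : Set α, IsCut G s t K ∧ (∀ K', IsCut G s t K' → K.ncard ≤ K'.ncard) ∧
      OPT = (K.ncard : ℝ) := by
  classical
  obtain ⟨⟨p, hp, rfl⟩, hOPT⟩ := hOPT
  obtain ⟨K₀, hK₀, hK₀p⟩ := hp.exists_isCut_ncard_le
  obtain ⟨K, hK, hmin⟩ :=
    Set.exists_min_image {K | IsCut G s t K} Set.ncard (Set.toFinite _) ⟨K₀, hK₀⟩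
  have hopt : ∑ v, p v = K.ncard := by
    refine le_antisymm (hOPT ⟨_, hK.feasible_indicator, Set.sum_indicator_one_eq_ncard K⟩) ?_
    exact (Nat.cast_le.2 (hmin K₀ hK₀)).trans hK₀p
  exact ⟨⟨K.indicator 1, hK.feasible_indicator, by rw [Set.sum_indicator_one_eq_ncard, hopt],
    fun v => Set.indicator_eq_zero_or_self K 1 v⟩, K, hK, hmin, hopt⟩

/-- if all edge weights are `1`, MSPEC has an optimal solution with all
powers in `{0,1}`, and its optimal value equals the size of a minimum `s`-`t` vertex
cut of `G` (restricted to `V`). -/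
theorem uniform_weights_vertex_cut [Fintype α]
    (G : SimpleGraph α) (s t : α) (hst : s ≠ t) (hadj : ¬ G.Adj s t)
    (OPT : ℝ)
    (hOPT : IsLeast {c : ℝ | ∃ p, Feasible G (fun _ => 1) s t p ∧ ∑ v, p v = c} OPT) :
    (∃ p, Feasible G (fun _ => 1) s t p ∧ ∑ v, p v = OPT ∧
      ∀ v, p v = 0 ∨ p v = 1) ∧
    ∃ K : Set α, IsCut G s t K ∧ (∀ K', IsCut G s t K' → K.ncard ≤ K'.ncard) ∧
      OPT = (K.ncard : ℝ) :=
  uniform_weights_vertex_cut_general G s t OPT hOPT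
end

section
/- If all edge weights of G are non-negative integers, then MSPEC has an optimal solution in which every power value is a non-negative integer. -/
/-!
Let `p` be optimal and `S` the set of vertices still reachable from `s` once the edges covered by
`p` are removed. Then `p` is a `w`-cover of the edges leaving `S`, and every nonnegative cover of
those edges vanishing at `s` and `t` is feasible. Such a cover can be made integral at no extra cost,
as in Egerváry's theorem: shift all fractional values by a common `ε`, down inside `S` and up
outside it (or the reverse, whichever does not raise the cost). Edges with both ends fractional keep
their load, and the integrality of `w` absorbs the loss on the others. Choosing `ε` as the least
distance of a fractional value to the next integer in its direction makes one more value integral,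
and integral values, in particular those at `s` and `t`, never move.
-/

open Finset

variable {α : Type*}

open scoped Classical

noncomputable section

def CoversEdgeBoundary (G : SimpleGraph α) (w : Sym2 α → ℝ) (S : Set α) (p : α → ℝ) : Prop :=
  ∀ ⦃u v⦄, u ∈ S → v ∉ S → G.Adj u v → w s(u, v) ≤ p u + p v

def fractionalVertices [Fintype α] (p : α → ℝ) : Finset α := {v | Int.fract (p v) ≠ 0}

def shift (S : Set α) (p : α → ℝ) (ε : ℝ) (v : α) : ℝ :=
  if Int.fract (p v) = 0 then p v else if v ∈ S then p v - ε else p v + ε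

def slack (S : Set α) (p : α → ℝ) (v : α) : ℝ :=
  if v ∈ S then Int.fract (p v) else 1 - Int.fract (p v)

variable {G : SimpleGraph α} {w : Sym2 α → ℝ} {S : Set α} {p : α → ℝ} {ε : ℝ}

lemma shift_of_fract_eq_zero {v : α} (hv : Int.fract (p v) = 0) : shift S p ε v = p v :=
  if_pos hv

lemma fract_shift_slack {x : α} (hx : Int.fract (p x) ≠ 0) :
    Int.fract (shift S p (slack S p x) x) = 0 := by
  by_cases hxS : x ∈ S
  · simp [shift, slack, hx, hxS]
  · simp only [shift, slack, hx, hxS, if_false]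
    rw [show p x + (1 - Int.fract (p x)) = ((⌊p x⌋ + 1 : ℤ) : ℝ) by
      push_cast; linarith [Int.floor_add_fract (p x)]]
    exact Int.fract_intCast _

lemma slack_nonneg (v : α) : 0 ≤ slack S p v := by
  unfold slack
  split_ifs
  · exact Int.fract_nonneg _
  · linarith [Int.fract_lt_one (p v)]

lemma shift_nonneg (hp : ∀ v, 0 ≤ p v) (hε₀ : 0 ≤ ε)
    (hε : ∀ v ∈ S, Int.fract (p v) ≠ 0 → ε ≤ Int.fract (p v)) (v : α) :
    0 ≤ shift S p ε v := by
  unfold shift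
  split_ifs with hv hvS
  · exact hp v
  · have : (0 : ℝ) ≤ ⌊p v⌋ := mod_cast Int.floor_nonneg.2 (hp v)
    linarith [hε v hvS hv, Int.self_sub_fract (p v)]
  · linarith [hp v]

lemma sum_shift [Fintype α] :
    ∑ v, shift S p ε v = ∑ v, p v -
      ε * (#{v ∈ fractionalVertices p | v ∈ S} - #{v ∈ fractionalVertices p | v ∉ S}) := by
  have hshift : ∀ v, shift S p ε v =
      p v + if v ∈ fractionalVertices p then (if v ∈ S then -ε else ε) else 0 := by
    intro v
    unfold shift fractionalVertices
    split_ifs <;> simp_all [sub_eq_add_neg]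
  simp only [hshift, Finset.sum_add_distrib, ← Finset.sum_filter, Finset.sum_ite,
    Finset.sum_const, nsmul_eq_mul, Finset.filter_univ_mem]
  ring

lemma fractionalVertices_shift_ssubset [Fintype α] {x : α} (hx : x ∈ fractionalVertices p) :
    fractionalVertices (shift S p (slack S p x)) ⊂ fractionalVertices p := by
  have hx' : Int.fract (p x) ≠ 0 := by simpa [fractionalVertices] using hx
  refine Finset.ssubset_iff_of_subset (fun v hv => ?_) |>.2 ⟨x, hx, ?_⟩
  · simp only [fractionalVertices, Finset.mem_filter, Finset.mem_univ, true_and] at hv ⊢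
    exact fun hv0 => hv (by rw [shift_of_fract_eq_zero hv0, hv0])
  · simp [fractionalVertices, fract_shift_slack hx']

lemma coversEdgeBoundary_reachable (G : SimpleGraph α) (w : Sym2 α → ℝ) (p : α → ℝ) (s : α) :
    CoversEdgeBoundary G w {v | (cutGraph G w p).Reachable s v} p := by
  intro u v hu hv huv
  by_contra! h
  exact hv (hu.trans (SimpleGraph.Adj.reachable ⟨huv, h⟩))

namespace CoversEdgeBoundary

lemma compl (h : CoversEdgeBoundary G w S p) : CoversEdgeBoundary G w Sᶜ p := by
  intro u v hu hv huv
  rw [Sym2.eq_swap, add_comm]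
  exact h (Set.notMem_compl_iff.1 hv) hu huv.symm

lemma not_reachable (h : CoversEdgeBoundary G w S p) {s t : α} (hs : s ∈ S) (ht : t ∉ S) :
    ¬ (cutGraph G w p).Reachable s t := by
  rintro ⟨W⟩
  suffices ∀ {x y} (W : (cutGraph G w p).Walk x y), x ∈ S → y ∈ S from ht (this W hs)
  intro x y W
  induction W with
  | nil => exact id
  | cons hxy _ ih =>
    exact fun hx => ih (by_contra fun hy => hxy.2.not_ge (h hx hy hxy.1))

lemma shift (hw : ∀ e, ∃ z : ℕ, w e = z) (h : CoversEdgeBoundary G w S p)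
    (hε₀ : 0 ≤ ε) (hε : ∀ v ∈ S, Int.fract (p v) ≠ 0 → ε ≤ Int.fract (p v)) :
    CoversEdgeBoundary G w S (_root_.shift S p ε) := by
  intro u v hu hv huv
  have huv' := h hu hv huv
  by_cases hup : Int.fract (p u) = 0 <;> by_cases hvp : Int.fract (p v) = 0 <;>
    simp only [_root_.shift, hup, hvp, hu, hv, if_true, if_false]
  · exact huv'
  · linarith
  · -- `w - p v` is an integer below `p u`, hence below `⌊p u⌋ = p u - fract (p u)`.
    obtain ⟨z, hz⟩ := hw s(u, v)
    have hfloor : ((z : ℤ) - ⌊p v⌋ : ℤ) ≤ ⌊p u⌋ := by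
      rw [Int.le_floor]
      push_cast
      linarith [Int.floor_add_fract (p v)]
    have : (z : ℝ) - ⌊p v⌋ ≤ ⌊p u⌋ := mod_cast hfloor
    linarith [hε u hu hup, Int.self_sub_fract (p u), Int.floor_add_fract (p v)]
  · linarith

lemma exists_shift_of_card_le [Fintype α] (hw : ∀ e, ∃ z : ℕ, w e = z)
    (hp : ∀ v, 0 ≤ p v) (h : CoversEdgeBoundary G w S p) (hne : (fractionalVertices p).Nonempty)
    (hcard : #{v ∈ fractionalVertices p | v ∉ S} ≤ #{v ∈ fractionalVertices p | v ∈ S}) :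
    ∃ p', (∀ v, 0 ≤ p' v) ∧ CoversEdgeBoundary G w S p' ∧ ∑ v, p' v ≤ ∑ v, p v ∧
      (∀ v, Int.fract (p v) = 0 → p' v = p v) ∧ fractionalVertices p' ⊂ fractionalVertices p := by
  obtain ⟨x, hx, hmin⟩ := (fractionalVertices p).exists_min_image (slack S p) hne
  have hε : ∀ v ∈ S, Int.fract (p v) ≠ 0 → slack S p x ≤ Int.fract (p v) := fun v hvS hv => by
    simpa [slack, hvS] using hmin v (by simpa [fractionalVertices] using hv)
  refine ⟨_root_.shift S p (slack S p x), shift_nonneg hp (slack_nonneg x) hε,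
    h.shift hw (slack_nonneg x) hε, ?_, fun v hv => shift_of_fract_eq_zero hv,
    fractionalVertices_shift_ssubset hx⟩
  have : (#{v ∈ fractionalVertices p | v ∉ S} : ℝ) ≤ #{v ∈ fractionalVertices p | v ∈ S} :=
    mod_cast hcard
  rw [sum_shift]
  exact sub_le_self _ (mul_nonneg (slack_nonneg x) (sub_nonneg.2 this))

lemma exists_shift [Fintype α] (hw : ∀ e, ∃ z : ℕ, w e = z)
    (hp : ∀ v, 0 ≤ p v) (h : CoversEdgeBoundary G w S p) (hne : (fractionalVertices p).Nonempty) :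
    ∃ p', (∀ v, 0 ≤ p' v) ∧ CoversEdgeBoundary G w S p' ∧ ∑ v, p' v ≤ ∑ v, p v ∧
      (∀ v, Int.fract (p v) = 0 → p' v = p v) ∧ fractionalVertices p' ⊂ fractionalVertices p := by
  rcases le_total #{v ∈ fractionalVertices p | v ∉ S} #{v ∈ fractionalVertices p | v ∈ S}
    with hcard | hcard
  · exact h.exists_shift_of_card_le hw hp hne hcard
  · obtain ⟨p', hp', h', hsum, hfix, hlt⟩ :=
      h.compl.exists_shift_of_card_le hw hp hne (by simpa only [Set.mem_compl_iff, not_not])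
    exact ⟨p', hp', compl_compl S ▸ h'.compl, hsum, hfix, hlt⟩

lemma exists_integral [Fintype α] (hw : ∀ e, ∃ z : ℕ, w e = z)
    (hp : ∀ v, 0 ≤ p v) (h : CoversEdgeBoundary G w S p) :
    ∃ q, (∀ v, 0 ≤ q v) ∧ CoversEdgeBoundary G w S q ∧ ∑ v, q v ≤ ∑ v, p v ∧
      (∀ v, Int.fract (p v) = 0 → q v = p v) ∧ ∀ v, Int.fract (q v) = 0 := by
  induction hF : fractionalVertices p using Finset.strongInduction generalizing p with
  | H F ih =>
    obtain rfl | hne := F.eq_empty_or_nonempty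
    · refine ⟨p, hp, h, le_rfl, fun _ _ => rfl, fun v => ?_⟩
      simpa [fractionalVertices] using Finset.ext_iff.1 hF v
    · obtain ⟨p', hp', h', hsum, hfix, hlt⟩ := h.exists_shift hw hp (hF ▸ hne)
      obtain ⟨q, hq, hq', hsum', hfix', hint⟩ := ih _ (hF ▸ hlt) hp' h' rfl
      refine ⟨q, hq, hq', hsum'.trans hsum, fun v hv => ?_, hint⟩
      rw [hfix' v (by rwa [hfix v hv]), hfix v hv]

end CoversEdgeBoundary

/-- if all edge weights are non-negative integers, MSPEC has an optimal
solution in which every power is a non-negative integer. -/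
theorem integral_weights_integral_opt [Fintype α]
    (G : SimpleGraph α) (w : Sym2 α → ℝ) (s t : α)
    (hw : ∀ e, ∃ z : ℕ, w e = z)
    (OPT : ℝ)
    (hOPT : IsLeast {c : ℝ | ∃ p, Feasible G w s t p ∧ ∑ v, p v = c} OPT) :
    ∃ p, Feasible G w s t p ∧ ∑ v, p v = OPT ∧ ∀ v, ∃ z : ℕ, p v = z := by
  obtain ⟨⟨p, ⟨hs, ht, hp, hst⟩, rfl⟩, hmin⟩ := hOPT
  obtain ⟨q, hq, hcov, hsum, hfix, hint⟩ :=
    (coversEdgeBoundary_reachable G w p s).exists_integral hw hp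
  have hfeas : Feasible G w s t q :=
    ⟨by rw [hfix s (by simp [hs]), hs], by rw [hfix t (by simp [ht]), ht], hq,
      hcov.not_reachable (SimpleGraph.Reachable.refl s) hst⟩
  refine ⟨q, hfeas, hsum.antisymm (hmin ⟨q, hfeas, rfl⟩), fun v => ⟨⌊q v⌋₊, ?_⟩⟩
  rw [natCast_floor_eq_intCast_floor (hq v), ← Int.self_sub_fract, hint v, sub_zero]

end
end

section
/- The LP relaxation of the natural path-covering ILP for MSPEC has integrality gap at least 2: there is a graph instance whose optimal integral value is 1 but whose LP relaxation admits a feasible solution of value 1/2. -/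
open Finset

variable {α : Type*}

/-- Feasibility for the LP relaxation of the natural path-covering ILP for MSPEC. -/
def LPFeas [Fintype α] [DecidableEq α] (G : SimpleGraph α) (w : Sym2 α → ℝ)
    (s t : α) (p : α → ℝ) (x : Sym2 α → ℝ) : Prop :=
  p s = 0 ∧ p t = 0 ∧ (∀ v, 0 ≤ p v) ∧ (∀ e, 0 ≤ x e ∧ x e ≤ 1) ∧
  (∀ u v, G.Adj u v → w s(u, v) * x s(u, v) ≤ p u + p v) ∧
  (∀ π : G.Walk s t, π.IsPath → 1 ≤ ∑ e ∈ π.edges.toFinset, x e)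

/-- Feasibility for the ILP: additionally every `x` value is `0` or `1`. -/
def ILPFeas [Fintype α] [DecidableEq α] (G : SimpleGraph α) (w : Sym2 α → ℝ)
    (s t : α) (p : α → ℝ) (x : Sym2 α → ℝ) : Prop :=
  LPFeas G w s t p x ∧ ∀ e, x e = 0 ∨ x e = 1

/- On the path `s - m - t` with unit weights, an integral solution must cut one of the two
edges, which forces `p m ≥ 1`; fractionally, `x ≡ 1/2` covers the only `s`-`t` path and is
paid for by `p m = 1/2`. -/

namespace SimpleGraph.Walk

variable {V : Type*} {G : SimpleGraph V}

theorem two_le_length_of_ne_of_not_adj {u v : V} (p : G.Walk u v) (hne : u ≠ v)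
    (hadj : ¬G.Adj u v) : 2 ≤ p.length := by
  by_contra! hlt
  interval_cases h : p.length
  · exact hne (eq_of_length_eq_zero h)
  · exact hadj (adj_of_length_eq_one h)

theorem IsPath.card_edges_toFinset [DecidableEq V] {u v : V} {p : G.Walk u v} (hp : p.IsPath) :
    p.edges.toFinset.card = p.length := by
  rw [List.toFinset_card_of_nodup hp.edges_nodup, length_edges]

end SimpleGraph.Walk

open SimpleGraph

section
variable [Fintype α] [DecidableEq α] {G : SimpleGraph α} {w : Sym2 α → ℝ} {s t : α}
  {p : α → ℝ} {x : Sym2 α → ℝ}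

theorem lpFeas_const {c : ℝ} {k : ℕ} (hs : p s = 0) (ht : p t = 0) (hp : ∀ v, 0 ≤ p v)
    (hc₀ : 0 ≤ c) (hc₁ : c ≤ 1) (hw : ∀ u v, G.Adj u v → w s(u, v) * c ≤ p u + p v)
    (hlen : ∀ π : G.Walk s t, π.IsPath → k ≤ π.length) (hk : 1 ≤ k * c) :
    LPFeas G w s t p (fun _ => c) := by
  refine ⟨hs, ht, hp, fun _ => ⟨hc₀, hc₁⟩, hw, fun π hπ => ?_⟩
  rw [sum_const, nsmul_eq_mul, hπ.card_edges_toFinset]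
  exact hk.trans (by gcongr; exact_mod_cast hlen π hπ)

theorem LPFeas.one_le_add_of_adj_of_adj {m : α} (h : LPFeas G w s t p x) (hsm : G.Adj s m)
    (hmt : G.Adj m t) (hst : s ≠ t) : 1 ≤ x s(s, m) + x s(m, t) := by
  have hπ : (Walk.cons hsm (Walk.cons hmt .nil)).IsPath := by
    simp [Walk.isPath_def, hsm.ne, hmt.ne, hst]
  simpa [sum_pair (show s(s, m) ≠ s(m, t) by simp [hsm.ne, hst])] using h.2.2.2.2.2 _ hπ

theorem ILPFeas.min_le_of_adj_of_adj {m : α} (h : ILPFeas G w s t p x) (hsm : G.Adj s m)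
    (hmt : G.Adj m t) (hst : s ≠ t) : min (w s(s, m)) (w s(m, t)) ≤ p m := by
  have hcover := h.1.one_le_add_of_adj_of_adj hsm hmt hst
  obtain ⟨⟨hs, ht, -, hx, hw, -⟩, hint⟩ := h
  have hsm' := hw s m hsm
  have hmt' := hw m t hmt
  rw [hs, zero_add] at hsm'
  rw [ht, add_zero] at hmt'
  rcases hint s(s, m) with hsm₀ | hsm₁
  · have hmt₁ : x s(m, t) = 1 := by linarith [(hx s(m, t)).2]
    rw [hmt₁, mul_one] at hmt'
    exact (min_le_right _ _).trans hmt'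
  · rw [hsm₁, mul_one] at hsm'
    exact (min_le_left _ _).trans hsm'

end

theorem pathGraph_three_adj_one {u v : Fin 3} (h : (pathGraph 3).Adj u v) : u = 1 ∨ v = 1 := by
  rw [pathGraph_adj] at h
  fin_cases u <;> fin_cases v <;> simp_all

theorem lpFeas_pathGraph_three_single {c : ℝ} (hc₀ : 0 ≤ c) (hc₁ : c ≤ 1) (hc : 1 ≤ 2 * c) :
    LPFeas (pathGraph 3) (fun _ => 1) 0 2 (Pi.single 1 c) (fun _ => c) := by
  have hp : ∀ v, 0 ≤ (Pi.single 1 c : Fin 3 → ℝ) v := fun v => by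
    by_cases hv : v = 1 <;> simp [hv, hc₀]
  refine lpFeas_const (k := 2) (by simp) (by simp) hp hc₀ hc₁ (fun u v huv => ?_)
    (fun π _ => π.two_le_length_of_ne_of_not_adj (by decide) (by simp [pathGraph_adj])) (by simpa)
  rcases pathGraph_three_adj_one huv with rfl | rfl
  · simpa using hp v
  · simpa using hp u

/-- the LP relaxation of the path-covering ILP for MSPEC has
integrality gap at least 2: there is an instance with optimal integral value `1`
admitting a fractional solution of value `1/2`. -/
theorem integrality_gap_two :
    ∃ (G : SimpleGraph (Fin 3)) (w : Sym2 (Fin 3) → ℝ) (s t : Fin 3),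
      IsLeast {c : ℝ | ∃ p x, ILPFeas G w s t p x ∧ ∑ v, p v = c} 1 ∧
      ∃ p x, LPFeas G w s t p x ∧ ∑ v, p v = 1 / 2 := by
  refine ⟨pathGraph 3, fun _ => 1, 0, 2, ⟨?_, ?_⟩, Pi.single 1 (1 / 2), fun _ => 1 / 2,
    lpFeas_pathGraph_three_single (by norm_num) (by norm_num) (by norm_num), by simp⟩
  · exact ⟨Pi.single 1 1, fun _ => 1, ⟨lpFeas_pathGraph_three_single zero_le_one le_rfl
      (by norm_num), fun _ => Or.inr rfl⟩, by simp⟩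
  · rintro _ ⟨p, x, h, rfl⟩
    calc (1 : ℝ) = min 1 1 := (min_self 1).symm
      _ ≤ p 1 := h.min_le_of_adj_of_adj (by simp [pathGraph_adj]) (by simp [pathGraph_adj])
          (by decide)
      _ ≤ ∑ v, p v := single_le_sum (fun v _ => h.1.2.2.1 v) (mem_univ 1)
end
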